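/- Let k_vn, k_vcy, k_nt, A_cyto, τ, K_c be positive reals, k_vt := k_vn + k_vcy, and m, m_sca ≥ 1 integers. Then the planar vector field (F₁, F₂) of the bistable phosphorylation system points into the triangle T = {(c_no, c_nop) : c_no ≥ 0, c_nop ≥ 0, c_no + c_nop ≤ 1/A_cyto} along its boundary. Precisely: (i) F₁(0, c_nop) ≥ k_vn > 0 for every c_nop ≥ 0; (ii) F₂(c_no, 0) ≥ 0 for every c_no ≥ 0; and (iii) F₁(c_no, c_nop) + F₂(c_no, c_nop) = −k_vcy < 0 whenever c_no ≥ 0, c_nop ≥ 0 and c_no + c_nop = 1/A_cyto. -/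
import Mathlib


/-- The smooth scaling function of the bistable phosphorylation model. -/
noncomputable def fSca (K_c : ℝ) (m_sca : ℕ) (x : ℝ) : ℝ :=
  K_c * (5 / 4 - (9 / 8) * (x / K_c) ^ m_sca / ((x / K_c) ^ m_sca + (9 / 64 : ℝ) ^ m_sca))

/-- The phosphorylation rate `f_p`. -/
noncomputable def fP (τ K_c : ℝ) (m m_sca : ℕ) (c_no c_nop : ℝ) : ℝ :=
  (1 / τ) * ((c_no + c_nop) ^ (m + 1) /
    ((c_no + c_nop) ^ m + (fSca K_c m_sca c_nop) ^ m))

/-- The dephosphorylation rate `f_dp`. -/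
noncomputable def fDP (τ : ℝ) (c_nop : ℝ) : ℝ := c_nop / τ

/-- First component of the planar vector field of the 2D bistable phosphorylation
and cell growth system. -/
noncomputable def F1 (k_vn k_vcy k_nt A_cyto τ K_c : ℝ) (m m_sca : ℕ)
    (c_no c_nop : ℝ) : ℝ :=
  k_vn - fP τ K_c m m_sca c_no c_nop + fDP τ c_nop
    - c_no * A_cyto * ((k_vn + k_vcy) - k_nt * c_nop)

/-- Second component of the planar vector field of the 2D bistable phosphorylation
and cell growth system. -/
noncomputable def F2 (k_vn k_vcy k_nt A_cyto τ K_c : ℝ) (m m_sca : ℕ)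
    (c_no c_nop : ℝ) : ℝ :=
  fP τ K_c m m_sca c_no c_nop - fDP τ c_nop - k_nt * c_nop
    - c_nop * A_cyto * ((k_vn + k_vcy) - k_nt * c_nop)

lemma fSca_pos (K_c : ℝ) (hK : 0 < K_c) (m_sca : ℕ) (x : ℝ) (hx : 0 ≤ x) :
    0 < fSca K_c m_sca x := by
  unfold fSca
  apply mul_pos hK
  have ht0 : 0 ≤ (x / K_c) ^ m_sca := pow_nonneg (div_nonneg hx hK.le) _
  have ha : 0 < ((9 : ℝ) / 64) ^ m_sca := pow_pos (by norm_num) _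
  have hd : 0 < (x / K_c) ^ m_sca + ((9 : ℝ) / 64) ^ m_sca := by linarith
  have h1 : (x / K_c) ^ m_sca / ((x / K_c) ^ m_sca + ((9 : ℝ) / 64) ^ m_sca) < 1 := by
    rw [div_lt_one hd]; linarith
  have h0 : 0 ≤ (x / K_c) ^ m_sca / ((x / K_c) ^ m_sca + ((9 : ℝ) / 64) ^ m_sca) :=
    div_nonneg ht0 hd.le
  rw [mul_div_assoc]
  nlinarith

theorem vector_field_points_inward
    (k_vn k_vcy k_nt A_cyto τ K_c : ℝ)
    (hvn : 0 < k_vn) (hvcy : 0 < k_vcy) (hnt : 0 < k_nt)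
    (hA : 0 < A_cyto) (hτ : 0 < τ) (hK : 0 < K_c)
    (m m_sca : ℕ) (hm : 1 ≤ m) (hmsca : 1 ≤ m_sca) :
    (∀ c_nop : ℝ, 0 ≤ c_nop →
      F1 k_vn k_vcy k_nt A_cyto τ K_c m m_sca 0 c_nop ≥ k_vn) ∧
    (∀ c_no : ℝ, 0 ≤ c_no →
      F2 k_vn k_vcy k_nt A_cyto τ K_c m m_sca c_no 0 ≥ 0) ∧
    (∀ c_no c_nop : ℝ, 0 ≤ c_no → 0 ≤ c_nop → c_no + c_nop = 1 / A_cyto →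
      F1 k_vn k_vcy k_nt A_cyto τ K_c m m_sca c_no c_nop +
        F2 k_vn k_vcy k_nt A_cyto τ K_c m m_sca c_no c_nop = -k_vcy) := by
  refine ⟨?_, ?_, ?_⟩
  · intro c_nop hnop
    have hs := fSca_pos K_c hK m_sca c_nop hnop
    have hd : 0 < (0 + c_nop) ^ m + (fSca K_c m_sca c_nop) ^ m := by positivity
    have hle : (0 + c_nop) ^ (m + 1) / ((0 + c_nop) ^ m + (fSca K_c m_sca c_nop) ^ m)
        ≤ c_nop := by
      rw [div_le_iff₀ hd, pow_succ]
      nlinarith [pow_nonneg hnop m, pow_pos hs m, pow_nonneg (by linarith : (0:ℝ) ≤ 0 + c_nop) m]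
    have hτ' : 0 < 1 / τ := by positivity
    unfold F1 fP fDP
    have : (1 / τ) * ((0 + c_nop) ^ (m + 1) /
        ((0 + c_nop) ^ m + (fSca K_c m_sca c_nop) ^ m)) ≤ (1 / τ) * c_nop :=
      mul_le_mul_of_nonneg_left hle hτ'.le
    have h2 : c_nop / τ = (1 / τ) * c_nop := by ring
    nlinarith
  · intro c_no hno
    have hs := fSca_pos K_c hK m_sca 0 le_rfl
    unfold F2 fP fDP
    have hd : 0 < (c_no + 0) ^ m + (fSca K_c m_sca 0) ^ m := by positivity
    have hnum : 0 ≤ (c_no + 0) ^ (m + 1) := by positivity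
    have : 0 ≤ (1 / τ) * ((c_no + 0) ^ (m + 1) /
        ((c_no + 0) ^ m + (fSca K_c m_sca 0) ^ m)) := by positivity
    simp only [mul_zero, zero_div, mul_zero, sub_zero]
    linarith [this]
  · intro c_no c_nop hno hnop h
    have h' : (c_no + c_nop) * A_cyto = 1 := by
      rw [h]; field_simp
    unfold F1 F2
    linear_combination (k_nt * c_nop - (k_vn + k_vcy)) * h'
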